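/- arXiv:2001.01542 — 2 statements merged into one kernel-verified Lean document; each statement's English description precedes it below -/
import Mathlib

section
/- For every basis Δ of Φ, every subset Δ_P ⊆ Δ and every w ∈ W(Φ), one has w·F^v_R(Δ, Δ_P) = F^v_R(w(Δ), w(Δ_P)). Moreover, if R is divisible, then for any basis Δ of Φ, V_R = ⋃_{w ∈ W(Φ)} w·C̄^v_{R,Δ}; in other words, the closed vector chamber C̄^v_{R,Δ} meets every W(Φ)-orbit in V_R. -/
/-!
A linear automorphism `w` of `V_ℤ` acts compatibly on roots and on `V_R`:
`(w·β)(w·x) = β(x)`. Hence `w` carries the face cut out by `(Δ, Δ_P)` onto the face cut out by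
`(w Δ, w Δ_P)`.

For the covering statement, count the positive roots that are negative on `x`. If `x` is not
in the closed chamber, some simple root `α` is negative on `x`. The reflection `r_α` maps the
positive roots that are not multiples of `α` to positive roots, and no such root maps to `α`,
while the positive multiples of `α` are never negative on `r_α x`. So `r_α x` has strictly fewer
such roots, and descent on this number reaches the closed chamber.
-/

open scoped Classical TensorProduct

section RootSetup

variable {VZ : Type*} [AddCommGroup VZ]

/-- the additive map `α ⊗ id_R : V_R = V_ℤ ⊗ R → R` induced by a root `α`. -/
noncomputable def rootR (R : Type*) [AddCommGroup R] [LinearOrder R] [IsOrderedAddMonoid R] (α : VZ →ₗ[ℤ] ℤ) :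
    VZ ⊗[ℤ] R →ₗ[ℤ] R :=
  (TensorProduct.lid ℤ R).toLinearMap.comp (LinearMap.rTensor R α)

/-- `Δ` is a basis of the root system `Φ` (in the sense of Bourbaki): `Δ ⊆ Φ` is linearly
independent and every root is a linear combination of `Δ` with coefficients that are all
non-negative integers or all non-positive integers. -/
def IsBase (Φ Δ : Finset (VZ →ₗ[ℤ] ℤ)) : Prop :=
  Δ ⊆ Φ ∧ LinearIndependent ℤ (fun a : {x // x ∈ Δ} => (a : VZ →ₗ[ℤ] ℤ)) ∧
    ∀ β ∈ Φ, (∃ c : (VZ →ₗ[ℤ] ℤ) → ℕ, β = ∑ a ∈ Δ, (c a : ℤ) • a) ∨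
      ∃ c : (VZ →ₗ[ℤ] ℤ) → ℕ, β = -∑ a ∈ Δ, (c a : ℤ) • a

/-- `Φ⁺_Δ`, the positive roots with respect to the basis `Δ`. -/
noncomputable def PosRoots (Φ Δ : Finset (VZ →ₗ[ℤ] ℤ)) : Finset (VZ →ₗ[ℤ] ℤ) :=
  Φ.filter fun β => ∃ c : (VZ →ₗ[ℤ] ℤ) → ℕ, β = ∑ a ∈ Δ, (c a : ℤ) • a

/-- the open vector chamber `C^v_{R,Δ}`. -/
def chamberR (R : Type*) [AddCommGroup R] [LinearOrder R] [IsOrderedAddMonoid R] (Δ : Finset (VZ →ₗ[ℤ] ℤ)) :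
    Set (VZ ⊗[ℤ] R) :=
  {x | ∀ α ∈ Δ, 0 < rootR R α x}

/-- the closed vector chamber `C̄^v_{R,Δ}`. -/
def closedChamberR (R : Type*) [AddCommGroup R] [LinearOrder R] [IsOrderedAddMonoid R] (Δ : Finset (VZ →ₗ[ℤ] ℤ)) :
    Set (VZ ⊗[ℤ] R) :=
  {x | ∀ α ∈ Δ, 0 ≤ rootR R α x}

/-- the vector face `F^v_R(Δ, Δ_P)`. -/
def faceR (R : Type*) [AddCommGroup R] [LinearOrder R] [IsOrderedAddMonoid R] (Δ ΔP : Finset (VZ →ₗ[ℤ] ℤ)) :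
    Set (VZ ⊗[ℤ] R) :=
  {x | (∀ α ∈ ΔP, rootR R α x = 0) ∧ ∀ α ∈ Δ, α ∉ ΔP → 0 < rootR R α x}

/-- the Weyl group `W(Φ)`, generated by the reflections `r_α : x ↦ x − α(x)·α^∨`. -/
def Weyl (Φ : Finset (VZ →ₗ[ℤ] ℤ)) (coroot : (VZ →ₗ[ℤ] ℤ) → VZ) : Subgroup (VZ ≃ₗ[ℤ] VZ) :=
  Subgroup.closure {e : VZ ≃ₗ[ℤ] VZ | ∃ α ∈ Φ, ∀ x : VZ, e x = x - α x • coroot α}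

/-- the action of `w ∈ W(Φ)` on roots: `w(α) = α ∘ w⁻¹`. -/
def dAct (w : VZ ≃ₗ[ℤ] VZ) (α : VZ →ₗ[ℤ] ℤ) : VZ →ₗ[ℤ] ℤ :=
  α.comp w.symm.toLinearMap

/-- the action of `w ∈ W(Φ)` on `V_R = V_ℤ ⊗ R`. -/
noncomputable def tAct (R : Type*) [AddCommGroup R] [LinearOrder R] [IsOrderedAddMonoid R] (w : VZ ≃ₗ[ℤ] VZ) :
    VZ ⊗[ℤ] R ≃ₗ[ℤ] VZ ⊗[ℤ] R :=
  TensorProduct.congr w (LinearEquiv.refl ℤ R)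

end RootSetup

section

variable {VZ : Type*} [AddCommGroup VZ]
variable {R : Type*} [AddCommGroup R] [LinearOrder R] [IsOrderedAddMonoid R]

section Action

lemma rootR_tmul (α : VZ →ₗ[ℤ] ℤ) (v : VZ) (r : R) : rootR R α (v ⊗ₜ r) = α v • r := rfl

lemma tAct_tmul (w : VZ ≃ₗ[ℤ] VZ) (v : VZ) (r : R) : tAct R w (v ⊗ₜ r) = w v ⊗ₜ r := rfl

lemma rootR_smul (k : ℤ) (α : VZ →ₗ[ℤ] ℤ) (x : VZ ⊗[ℤ] R) :
    rootR R (k • α) x = k • rootR R α x := by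
  induction x using TensorProduct.induction_on with
  | zero => simp
  | tmul v r => simp only [rootR_tmul, LinearMap.smul_apply, smul_eq_mul, mul_smul]
  | add a b ha hb => simp only [map_add, ha, hb, smul_add]

lemma rootR_tAct (w : VZ ≃ₗ[ℤ] VZ) (β : VZ →ₗ[ℤ] ℤ) (x : VZ ⊗[ℤ] R) :
    rootR R β (tAct R w x) = rootR R (β ∘ₗ w.toLinearMap) x := by
  induction x using TensorProduct.induction_on with
  | zero => simp
  | tmul v r => simp only [tAct_tmul, rootR_tmul, LinearMap.comp_apply, LinearEquiv.coe_coe]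
  | add a b ha hb => simp only [map_add, ha, hb]

lemma tAct_one (x : VZ ⊗[ℤ] R) : tAct R 1 x = x := by
  induction x using TensorProduct.induction_on with
  | zero => simp
  | tmul v r => rfl
  | add a b ha hb => simp only [map_add, ha, hb]

lemma tAct_mul (w₁ w₂ : VZ ≃ₗ[ℤ] VZ) (x : VZ ⊗[ℤ] R) :
    tAct R (w₁ * w₂) x = tAct R w₁ (tAct R w₂ x) := by
  induction x using TensorProduct.induction_on with
  | zero => simp
  | tmul v r => rfl
  | add a b ha hb => simp only [map_add, ha, hb]

lemma tAct_symm (w : VZ ≃ₗ[ℤ] VZ) : tAct R w.symm = (tAct R w).symm := rfl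

lemma dAct_injective (w : VZ ≃ₗ[ℤ] VZ) : Function.Injective (dAct w) := fun α β h => by
  ext v
  simpa [dAct] using LinearMap.congr_fun h (w v)

lemma image_tAct_faceR (Δ ΔP : Finset (VZ →ₗ[ℤ] ℤ)) (w : VZ ≃ₗ[ℤ] VZ) :
    tAct R w '' faceR R Δ ΔP = faceR R (Δ.image (dAct w)) (ΔP.image (dAct w)) := by
  ext y
  simp only [LinearEquiv.image_eq_preimage_symm, Set.mem_preimage, ← tAct_symm, faceR,
    Set.mem_ofPred_eq, rootR_tAct, Finset.forall_mem_image, (dAct_injective w).mem_finset_image]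
  rfl

end Action

section Reflection

lemma comp_reflection {α : VZ →ₗ[ℤ] ℤ} {c : VZ} (h : α c = 2) (β : VZ →ₗ[ℤ] ℤ) :
    β ∘ₗ (Module.reflection h).toLinearMap = β - β c • α := by
  ext v
  simp [Module.reflection_apply, mul_comm]

lemma reflection_mem_weyl {Φ : Finset (VZ →ₗ[ℤ] ℤ)} {coroot : (VZ →ₗ[ℤ] ℤ) → VZ}
    {α : VZ →ₗ[ℤ] ℤ} (hα : α ∈ Φ) (h : α (coroot α) = 2) :
    Module.reflection h ∈ Weyl Φ coroot :=
  Subgroup.subset_closure ⟨α, hα, fun v => Module.reflection_apply v h⟩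

end Reflection

section Base

variable {Φ Δ : Finset (VZ →ₗ[ℤ] ℤ)}

lemma IsBase.coeff_eq_zero (hΔ : IsBase Φ Δ) {g : (VZ →ₗ[ℤ] ℤ) → ℤ}
    (hg : ∑ a ∈ Δ, g a • a = 0) {b : VZ →ₗ[ℤ] ℤ} (hb : b ∈ Δ) : g b = 0 := by
  refine linearIndependent_iff'.mp hΔ.2.1 Finset.univ (fun a => g a) ?_ ⟨b, hb⟩ (Finset.mem_univ _)
  rwa [Finset.sum_coe_sort Δ fun a => g a • a]

lemma sum_ite_eq_smul {α : VZ →ₗ[ℤ] ℤ} (hα : α ∈ Δ) (k : ℤ) :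
    ∑ a ∈ Δ, (if a = α then k else 0) • a = k • α := by
  simp [ite_smul, hα]

lemma IsBase.mem_posRoots (hΔ : IsBase Φ Δ) {α : VZ →ₗ[ℤ] ℤ} (hα : α ∈ Δ) :
    α ∈ PosRoots Φ Δ := by
  refine Finset.mem_filter.mpr ⟨hΔ.1 hα, fun a => if a = α then 1 else 0, ?_⟩
  simp [apply_ite, ite_smul, hα]

lemma IsBase.neg_notMem_posRoots (hΔ : IsBase Φ Δ) {α : VZ →ₗ[ℤ] ℤ} (hα : α ∈ Δ) :
    -α ∉ PosRoots Φ Δ := by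
  rintro hneg
  obtain ⟨-, c, hc⟩ := Finset.mem_filter.mp hneg
  have hsum : ∑ a ∈ Δ, ((c a : ℤ) + if a = α then 1 else 0) • a = 0 := by
    simp only [add_smul, Finset.sum_add_distrib, ← hc, sum_ite_eq_smul hα, one_smul,
      neg_add_cancel]
  have := hΔ.coeff_eq_zero hsum hα
  simp only [↓reduceIte] at this
  omega

/-- Such a `β` has a positive coefficient at a simple root other than `α`, and subtracting
multiples of `α` leaves that coefficient unchanged, so `β - k • α` cannot be negative. -/
lemma IsBase.sub_smul_mem_posRoots (hΔ : IsBase Φ Δ) {α β : VZ →ₗ[ℤ] ℤ} (hα : α ∈ Δ)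
    (hβ : β ∈ PosRoots Φ Δ) (hβα : ∀ n : ℕ, β ≠ (n : ℤ) • α) {k : ℤ} (hk : β - k • α ∈ Φ) :
    β - k • α ∈ PosRoots Φ Δ := by
  obtain ⟨-, c, hc⟩ := Finset.mem_filter.mp hβ
  obtain ⟨b, hbΔ, hbα, hcb⟩ : ∃ b ∈ Δ, b ≠ α ∧ c b ≠ 0 := by
    by_contra! hall
    refine hβα (c α) ?_
    rw [hc, Finset.sum_eq_single_of_mem α hα fun b hb hbα => by simp [hall b hb hbα]]
  rcases hΔ.2.2 _ hk with ⟨d, hd⟩ | ⟨d, hd⟩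
  · exact Finset.mem_filter.mpr ⟨hk, d, hd⟩
  · have hsum : ∑ a ∈ Δ, ((c a : ℤ) + d a - if a = α then k else 0) • a = 0 := by
      have hd' : ∑ a ∈ Δ, (d a : ℤ) • a = k • α - β := by rw [← neg_sub, hd, neg_neg]
      simp only [sub_smul, add_smul, Finset.sum_sub_distrib, Finset.sum_add_distrib, ← hc, hd',
        sum_ite_eq_smul hα]
      abel
    have := hΔ.coeff_eq_zero hsum hbΔ
    simp only [if_neg hbα] at this
    omega

end Base

section Descent

variable {Φ Δ : Finset (VZ →ₗ[ℤ] ℤ)}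

variable (Φ Δ) in
noncomputable def inversionSet (x : VZ ⊗[ℤ] R) : Finset (VZ →ₗ[ℤ] ℤ) :=
  (PosRoots Φ Δ).filter fun β => rootR R β x < 0

lemma card_inversionSet_reflection_lt (hΔ : IsBase Φ Δ) {α : VZ →ₗ[ℤ] ℤ} {c : VZ}
    (hα : α ∈ Δ) (h : α c = 2) (hrefl : ∀ β ∈ Φ, β - β c • α ∈ Φ) {x : VZ ⊗[ℤ] R}
    (hx : rootR R α x < 0) :
    (inversionSet Φ Δ (tAct R (Module.reflection h) x)).card < (inversionSet Φ Δ x).card := by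
  set σ : (VZ →ₗ[ℤ] ℤ) → (VZ →ₗ[ℤ] ℤ) := fun β => β - β c • α with hσ
  have hroot (β : VZ →ₗ[ℤ] ℤ) : rootR R β (tAct R (Module.reflection h) x) = rootR R (σ β) x := by
    rw [rootR_tAct, comp_reflection]
  have hσσ : Function.Involutive σ := fun β => by
    simp only [hσ, LinearMap.sub_apply, LinearMap.smul_apply, h, smul_eq_mul]
    rw [show β c - β c * 2 = -β c by ring, neg_smul, sub_neg_eq_add, sub_add_cancel]
  have hσα : σ α = -α := by
    simp only [hσ, h, two_smul]
    abel
  have hmaps : Set.MapsTo σ (inversionSet Φ Δ (tAct R (Module.reflection h) x))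
      ((inversionSet Φ Δ x).erase α) := by
    intro β hβ
    obtain ⟨hβP, hβneg⟩ := Finset.mem_filter.mp hβ
    rw [hroot] at hβneg
    have hσP : σ β ∈ PosRoots Φ Δ := by
      refine hΔ.sub_smul_mem_posRoots hα hβP (fun n hn => ?_) (hrefl β (Finset.mem_filter.mp hβP).1)
      have hσn : σ β = (-(n : ℤ)) • α := by
        simp only [hσ, hn, LinearMap.smul_apply, h, smul_eq_mul, mul_two, add_smul, neg_smul]
        abel
      rw [hσn, rootR_smul, neg_smul, natCast_zsmul, neg_lt_zero] at hβneg
      exact hβneg.not_ge (nsmul_nonpos hx.le n)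
    have hσβα : σ β ≠ α := fun he => hΔ.neg_notMem_posRoots hα (by rwa [← hσα, ← he, hσσ β])
    exact Finset.mem_erase.mpr ⟨hσβα, Finset.mem_filter.mpr ⟨hσP, hβneg⟩⟩
  calc (inversionSet Φ Δ (tAct R (Module.reflection h) x)).card
      ≤ ((inversionSet Φ Δ x).erase α).card :=
        Finset.card_le_card_of_injOn σ hmaps hσσ.injective.injOn
    _ < (inversionSet Φ Δ x).card :=
        Finset.card_erase_lt_of_mem (Finset.mem_filter.mpr ⟨hΔ.mem_posRoots hα, hx⟩)

theorem exists_weyl_mem_image_closedChamberR {coroot : (VZ →ₗ[ℤ] ℤ) → VZ}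
    (h2 : ∀ α ∈ Φ, α (coroot α) = 2) (hrefl : ∀ α ∈ Φ, ∀ β ∈ Φ, β - β (coroot α) • α ∈ Φ)
    (hΔ : IsBase Φ Δ) (x : VZ ⊗[ℤ] R) :
    ∃ w ∈ Weyl Φ coroot, x ∈ tAct R w '' closedChamberR R Δ := by
  by_cases hx : x ∈ closedChamberR R Δ
  · exact ⟨1, one_mem _, x, hx, tAct_one x⟩
  obtain ⟨α, hαΔ, hαx⟩ : ∃ α ∈ Δ, rootR R α x < 0 := by
    simpa [closedChamberR] using hx
  have hαΦ := hΔ.1 hαΔ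
  set s := Module.reflection (h2 α hαΦ)
  have hdecreasing := card_inversionSet_reflection_lt hΔ hαΔ (h2 α hαΦ) (hrefl α hαΦ) hαx
  obtain ⟨w, hw, y, hy, hwy⟩ := exists_weyl_mem_image_closedChamberR h2 hrefl hΔ (tAct R s x)
  refine ⟨s * w, mul_mem (reflection_mem_weyl hαΦ _) hw, y, hy, ?_⟩
  rw [tAct_mul, hwy, ← tAct_mul,
    show s * s = 1 from LinearEquiv.ext (Module.involutive_reflection _), tAct_one]
termination_by (inversionSet Φ Δ x).card

end Descent

end

theorem statement9_general {VZ : Type*} [AddCommGroup VZ]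
    {R : Type*} [AddCommGroup R] [LinearOrder R] [IsOrderedAddMonoid R]
    (Φ : Finset (VZ →ₗ[ℤ] ℤ)) (coroot : (VZ →ₗ[ℤ] ℤ) → VZ)
    (h2 : ∀ α ∈ Φ, α (coroot α) = 2)
    (hrefl : ∀ α ∈ Φ, ∀ β ∈ Φ, β - β (coroot α) • α ∈ Φ)
    :
    (∀ Δ : Finset (VZ →ₗ[ℤ] ℤ), IsBase Φ Δ → ∀ ΔP : Finset (VZ →ₗ[ℤ] ℤ), ΔP ⊆ Δ →
      ∀ w ∈ Weyl Φ coroot,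
        (fun y => tAct R w y) '' faceR R Δ ΔP =
          faceR R (Δ.image (dAct w)) (ΔP.image (dAct w))) ∧
    ((∀ k : ℤ, k ≠ 0 → ∀ r : R, ∃ s : R, k • s = r) →
      ∀ Δ : Finset (VZ →ₗ[ℤ] ℤ), IsBase Φ Δ →
        ∀ x : VZ ⊗[ℤ] R, ∃ w ∈ Weyl Φ coroot,
          x ∈ (fun y => tAct R w y) '' closedChamberR R Δ) :=
  ⟨fun _ _ ΔP _ w _ => image_tAct_faceR _ ΔP w,
    fun _ _ hΔ x => exists_weyl_mem_image_closedChamberR h2 hrefl hΔ x⟩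

/-- **Statement 9.** For every basis `Δ` of `Φ`, `Δ_P ⊆ Δ` and `w ∈ W(Φ)` one has
`w·F^v_R(Δ, Δ_P) = F^v_R(w(Δ), w(Δ_P))`; moreover, if `R` is divisible, then
`V_R = ⋃_{w ∈ W(Φ)} w·C̄^v_{R,Δ}` for every basis `Δ`. -/
theorem statement9 {VZ : Type*} [AddCommGroup VZ] [Module.Free ℤ VZ]
    {R : Type*} [AddCommGroup R] [LinearOrder R] [IsOrderedAddMonoid R] [Nontrivial R]
    (Φ : Finset (VZ →ₗ[ℤ] ℤ)) (coroot : (VZ →ₗ[ℤ] ℤ) → VZ)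
    (h0 : (0 : VZ →ₗ[ℤ] ℤ) ∉ Φ)
    (h2 : ∀ α ∈ Φ, α (coroot α) = 2)
    (hrefl : ∀ α ∈ Φ, ∀ β ∈ Φ, β - β (coroot α) • α ∈ Φ)
    (hcorefl : ∀ α ∈ Φ, ∀ β ∈ Φ,
      coroot (β - β (coroot α) • α) = coroot β - α (coroot β) • coroot α)
    (hspan : Submodule.span ℤ (coroot '' (Φ : Set (VZ →ₗ[ℤ] ℤ))) = ⊤)
    (hnd : ∀ x : VZ, (∀ α ∈ Φ, α x = 0) → x = 0)
    :
    (∀ Δ : Finset (VZ →ₗ[ℤ] ℤ), IsBase Φ Δ → ∀ ΔP : Finset (VZ →ₗ[ℤ] ℤ), ΔP ⊆ Δ →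
      ∀ w ∈ Weyl Φ coroot,
        (fun y => tAct R w y) '' faceR R Δ ΔP =
          faceR R (Δ.image (dAct w)) (ΔP.image (dAct w))) ∧
    ((∀ k : ℤ, k ≠ 0 → ∀ r : R, ∃ s : R, k • s = r) →
      ∀ Δ : Finset (VZ →ₗ[ℤ] ℤ), IsBase Φ Δ →
        ∀ x : VZ ⊗[ℤ] R, ∃ w ∈ Weyl Φ coroot,
          x ∈ (fun y => tAct R w y) '' closedChamberR R Δ) :=
  statement9_general Φ coroot h2 hrefl
end

section
/- Let x ∈ L¹_max (in particular L¹_max ≠ ∅). Then S = ω(L⁰ ∖ {0}) ∪ (ω(x) + ω(N(L^×))), and the subset of maximal values {ω(v) : (u, v) ∈ H, v ≠ 0, and ω(v) ≥ ω(v + z) for every z ∈ L⁰} equals ω(x) + ω(N(L^×)). -/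
section QuadSetup

variable {K L Λ' : Type*} [Field K] [Field L] [Algebra K L] [AddCommGroup Λ'] [LinearOrder Λ']
    [IsOrderedAddMonoid Λ']

/-- `L^u_max`: the set of `y ∈ L` of trace `u ∈ K` at which `z ↦ ω(y + z)`, `z ∈ L⁰`,
attains its maximum at `z = 0`. -/
def Lmax (τ : L ≃ₐ[K] L) (ω : AddValuation L (WithTop Λ')) (u : K) : Set L :=
  {y : L | y + τ y = algebraMap K L u ∧ ∀ z : L, z + τ z = 0 → ω (y + z) ≤ ω y}

/-- `ω(L^×)` as a set of values. -/
def wLx (ω : AddValuation L (WithTop Λ')) : Set (WithTop Λ') :=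
  {c | ∃ y : L, y ≠ 0 ∧ ω y = c}

/-- `ω(K^×)` as a set of values. -/
def wKx (K : Type*) [Field K] [Algebra K L] (ω : AddValuation L (WithTop Λ')) :
    Set (WithTop Λ') :=
  {c | ∃ u : K, u ≠ 0 ∧ ω (algebraMap K L u) = c}

/-- `ω(L⁰ ∖ {0})` as a set of values. -/
def wL0 (τ : L ≃ₐ[K] L) (ω : AddValuation L (WithTop Λ')) : Set (WithTop Λ') :=
  {c | ∃ z : L, z ≠ 0 ∧ z + τ z = 0 ∧ ω z = c}

/-- `S = {ω(v) : (u, v) ∈ H, v ≠ 0}`, where `H = {(u,v) : u·τ(u) = v + τ(v)}`. -/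
def SH (τ : L ≃ₐ[K] L) (ω : AddValuation L (WithTop Λ')) : Set (WithTop Λ') :=
  {c | ∃ u v : L, u * τ u = v + τ v ∧ v ≠ 0 ∧ ω v = c}

/-- `ω(N(L^×))` as a set of values. -/
def wN (τ : L ≃ₐ[K] L) (ω : AddValuation L (WithTop Λ')) : Set (WithTop Λ') :=
  {c | ∃ z : L, z ≠ 0 ∧ ω (z * τ z) = c}

end QuadSetup


/-!
For `k ≠ 0` fixed by `τ`, `z ↦ z / k` preserves `L⁰`, so `k x` again maximizes `ω` on `k x + L⁰`.
For `(u, v) ∈ H` with `u ≠ 0`, `k = N(u)` is fixed and `v - k x ∈ L⁰`, so `ω(v) ≤ ω(x) + ω(N(u))`.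
With equality `ω(v) ∈ ω(x) + ω(N(L^×))`; otherwise `ω(v) = ω(v - k x) ∈ ω(L⁰ ∖ {0})`, and `v` is not
maximal because `v + (k x - v) = k x`. Pairs with `u = 0` have `v ∈ L⁰`, so `v` is not maximal either.
Conversely `(z, N(z) x) ∈ H` realizes `ω(x) + ω(N(z))` with `N(z) x` maximal.
-/

section QuadraticValuation

variable {K L Λ' : Type*} [Field K] [Field L] [Algebra K L]
    [AddCommGroup Λ'] [LinearOrder Λ'] [IsOrderedAddMonoid Λ']
    {τ : L ≃ₐ[K] L} {ω : AddValuation L (WithTop Λ')}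

variable (τ ω) in
def IsMaxOnTraceZeroCoset (y : L) : Prop :=
  ∀ z : L, z + τ z = 0 → ω (y + z) ≤ ω y

variable (τ ω) in
def SHmax : Set (WithTop Λ') :=
  {c | ∃ u v : L, u * τ u = v + τ v ∧ v ≠ 0 ∧ IsMaxOnTraceZeroCoset τ ω v ∧ ω v = c}

theorem wL0_subset_SH : wL0 τ ω ⊆ SH τ ω := by
  rintro _ ⟨z, hz, hz0, rfl⟩
  exact ⟨0, z, by rw [map_zero, zero_mul, hz0], hz, rfl⟩

theorem SHmax_subset_SH : SHmax τ ω ⊆ SH τ ω := by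
  rintro _ ⟨u, v, huv, hv, -, rfl⟩
  exact ⟨u, v, huv, hv, rfl⟩

theorem mul_apply_ne_zero {y : L} (hy : y ≠ 0) : y * τ y ≠ 0 :=
  mul_ne_zero hy ((map_ne_zero τ).mpr hy)

theorem apply_mul_apply_self (hτ2 : ∀ y : L, τ (τ y) = y) (y : L) :
    τ (y * τ y) = y * τ y := by
  rw [map_mul, hτ2, mul_comm]

theorem IsMaxOnTraceZeroCoset.mul_of_apply_eq {y k : L} (hy : IsMaxOnTraceZeroCoset τ ω y)
    (hk : τ k = k) (hk0 : k ≠ 0) : IsMaxOnTraceZeroCoset τ ω (k * y) := by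
  intro z hz
  have hzk : z / k + τ (z / k) = 0 := by
    rw [map_div₀, hk, ← add_div, hz, zero_div]
  calc ω (k * y + z) = ω k + ω (y + z / k) := by
        rw [← ω.map_mul]; congr 1; field_simp
    _ ≤ ω k + ω y := add_le_add_right (hy _ hzk) _
    _ = ω (k * y) := (ω.map_mul k y).symm

theorem not_isMaxOnTraceZeroCoset {v : L} (hv : v ≠ 0) (hv0 : v + τ v = 0) :
    ¬ IsMaxOnTraceZeroCoset τ ω v := by
  intro hmax
  have hneg : -v + τ (-v) = 0 := by rw [map_neg, ← neg_add, hv0, neg_zero]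
  have := hmax (-v) hneg
  rw [add_neg_cancel, ω.map_zero, top_le_iff, ω.top_iff] at this
  exact hv this

theorem trace_sub_mul_eq_zero {x k v : L} (hx : x + τ x = 1) (hk : τ k = k)
    (hkv : k = v + τ v) : (v - k * x) + τ (v - k * x) = 0 := by
  rw [map_sub, map_mul, hk, show τ x = 1 - x by linear_combination hx]
  linear_combination -hkv

theorem norm_eq_trace_norm_mul (hτ2 : ∀ y : L, τ (τ y) = y) {x : L} (hx : x + τ x = 1)
    (z : L) : z * τ z = z * τ z * x + τ (z * τ z * x) := by
  rw [map_mul, apply_mul_apply_self hτ2, ← mul_add, hx, mul_one]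

section MaxElement

variable {x : L} (hτ2 : ∀ y : L, τ (τ y) = y) (hx : x + τ x = 1)
include hτ2 hx

theorem val_le_val_norm_mul (hxmax : IsMaxOnTraceZeroCoset τ ω x) {u v : L}
    (huv : u * τ u = v + τ v) (hu : u ≠ 0) : ω v ≤ ω (u * τ u * x) := by
  have hmax := hxmax.mul_of_apply_eq (apply_mul_apply_self hτ2 u) (mul_apply_ne_zero hu)
  have := hmax _ (trace_sub_mul_eq_zero hx (apply_mul_apply_self hτ2 u) huv)
  rwa [add_sub_cancel] at this

theorem SH_subset_union (hxmax : IsMaxOnTraceZeroCoset τ ω x) :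
    SH τ ω ⊆ wL0 τ ω ∪ (fun c => ω x + c) '' wN τ ω := by
  rintro _ ⟨u, v, huv, hv, rfl⟩
  obtain rfl | hu := eq_or_ne u 0
  · refine Or.inl ⟨v, hv, ?_, rfl⟩
    rw [map_zero, zero_mul] at huv
    exact huv.symm
  obtain heq | hlt := (val_le_val_norm_mul hτ2 hx hxmax huv hu).eq_or_lt
  · exact Or.inr ⟨ω (u * τ u), ⟨u, hu, rfl⟩, by rw [heq, ω.map_mul (u * τ u) x, add_comm]⟩
  · have hval : ω (v - u * τ u * x) = ω v := ω.map_sub_eq_of_lt_left hlt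
    refine Or.inl ⟨v - u * τ u * x, fun h => ?_,
      trace_sub_mul_eq_zero hx (apply_mul_apply_self hτ2 u) huv, hval⟩
    rw [sub_eq_zero.mp h] at hlt
    exact hlt.false

theorem image_wN_subset_SHmax (hxmax : IsMaxOnTraceZeroCoset τ ω x) :
    (fun c => ω x + c) '' wN τ ω ⊆ SHmax τ ω := by
  rintro _ ⟨_, ⟨z, hz, rfl⟩, rfl⟩
  have hx0 : x ≠ 0 := by
    rintro rfl
    simp at hx
  refine ⟨z, z * τ z * x, norm_eq_trace_norm_mul hτ2 hx z,
    mul_ne_zero (mul_apply_ne_zero hz) hx0,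
    hxmax.mul_of_apply_eq (apply_mul_apply_self hτ2 z) (mul_apply_ne_zero hz), ?_⟩
  rw [ω.map_mul, add_comm]

theorem SHmax_subset_image (hxmax : IsMaxOnTraceZeroCoset τ ω x) :
    SHmax τ ω ⊆ (fun c => ω x + c) '' wN τ ω := by
  rintro _ ⟨u, v, huv, hv, hvmax, rfl⟩
  have hu : u ≠ 0 := by
    rintro rfl
    rw [map_zero, zero_mul] at huv
    exact not_isMaxOnTraceZeroCoset hv huv.symm hvmax
  have htr := trace_sub_mul_eq_zero hx (apply_mul_apply_self hτ2 u) huv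
  have hge : ω (u * τ u * x) ≤ ω v := by
    have := hvmax _ (show -(v - u * τ u * x) + τ (-(v - u * τ u * x)) = 0 by
      rw [map_neg, ← neg_add, htr, neg_zero])
    rwa [show v + -(v - u * τ u * x) = u * τ u * x by ring] at this
  have heq := (val_le_val_norm_mul hτ2 hx hxmax huv hu).antisymm hge
  exact ⟨ω (u * τ u), ⟨u, hu, rfl⟩, by rw [heq, ω.map_mul (u * τ u) x, add_comm]⟩

end MaxElement

end QuadraticValuation

theorem statement17_general {K L Λ' : Type*} [Field K] [Field L] [Algebra K L]
    [AddCommGroup Λ'] [LinearOrder Λ'] [IsOrderedAddMonoid Λ']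
    (τ : L ≃ₐ[K] L) (hτ2 : ∀ x : L, τ (τ x) = x)
    (ω : AddValuation L (WithTop Λ'))
    (x : L) (hx : x ∈ Lmax τ ω (1 : K)) :
    SH τ ω = wL0 τ ω ∪ (fun c => ω x + c) '' wN τ ω ∧
    {c : WithTop Λ' | ∃ u v : L, u * τ u = v + τ v ∧ v ≠ 0 ∧
        (∀ z : L, z + τ z = 0 → ω (v + z) ≤ ω v) ∧ ω v = c} =
      (fun c => ω x + c) '' wN τ ω := by
  obtain ⟨hxT, hxmax⟩ := hx
  rw [map_one] at hxT
  have himage := image_wN_subset_SHmax hτ2 hxT hxmax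
  refine ⟨(SH_subset_union hτ2 hxT hxmax).antisymm
    (Set.union_subset wL0_subset_SH (himage.trans SHmax_subset_SH)), ?_⟩
  exact (SHmax_subset_image hτ2 hxT hxmax).antisymm himage

/-- **Statement 17.** If `x ∈ L¹_max` (so `L¹_max ≠ ∅`), then
`S = ω(L⁰ ∖ {0}) ∪ (ω(x) + ω(N(L^×)))`, and the subset of maximal values of `S`
equals `ω(x) + ω(N(L^×))`. -/
theorem statement17 {K L Λ' : Type*} [Field K] [Field L] [Algebra K L]
    [AddCommGroup Λ'] [LinearOrder Λ'] [IsOrderedAddMonoid Λ']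
    (τ : L ≃ₐ[K] L) (hτ2 : ∀ x : L, τ (τ x) = x) (hτne : ∃ x : L, τ x ≠ x)
    (hfix : ∀ x : L, τ x = x ↔ ∃ k : K, algebraMap K L k = x)
    (hrank : Module.finrank K L = 2)
    (ω : AddValuation L (WithTop Λ')) (hωτ : ∀ x : L, ω (τ x) = ω x)
    (x : L) (hx : x ∈ Lmax τ ω (1 : K)) :
    SH τ ω = wL0 τ ω ∪ (fun c => ω x + c) '' wN τ ω ∧
    {c : WithTop Λ' | ∃ u v : L, u * τ u = v + τ v ∧ v ≠ 0 ∧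
        (∀ z : L, z + τ z = 0 → ω (v + z) ≤ ω v) ∧ ω v = c} =
      (fun c => ω x + c) '' wN τ ω :=
  statement17_general τ hτ2 ω x hx
end
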